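/- arXiv:1402.7313 — 4 statements merged into one kernel-verified Lean document; each statement's English description precedes it below -/
import Mathlib

section
/- Let 0<λ<1, d≥2, let A:ℝ→ℝ be Lipschitz and 1-periodic, and let b be the λ-calibrated subaction for A. Suppose z∈[0,1] is a periodic point of T of period k (T^k(z)=z) such that the calibration equality holds along its orbit: b(T(T^j z)) = λ b(T^j z) + A(T^j z) for every j≥0. Then the realizer can be taken periodic: there exists a∈Σ with σ^k(a)=a such that, setting x_0=z and x_{j+1}=τ_{a_j}(x_j), every x_j belongs to the orbit {z,T(z),…,T^{k−1}(z)}, b(x_j)=λ b(x_{j+1})+A(x_{j+1}) for all j≥0, and consequently b(z)=S(z,a). -/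
open Set

noncomputable section

/-- Inverse branch `τ_i(x) = (x+i)/d` of `T(x) = dx (mod 1)`. -/
def tau (d i : ℕ) (x : ℝ) : ℝ := (x + i) / d

/-- Iterated inverse branches: `tpath d a x k = (τ_{a_k} ∘ ⋯ ∘ τ_{a_0})(x)`. -/
def tpath (d : ℕ) (a : ℕ → ℕ) (x : ℝ) : ℕ → ℝ
  | 0 => tau d (a 0) x
  | k + 1 => tau d (a (k + 1)) (tpath d a x k)

/-- `S(x,a) = Σ_{k≥0} λ^k A(τ_{k,a} x)`. -/
def Sfun (lam : ℝ) (d : ℕ) (A : ℝ → ℝ) (x : ℝ) (a : ℕ → ℕ) : ℝ :=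
  ∑' k : ℕ, lam ^ k * A (tpath d a x k)

/-- The left shift `σ` on sequences. -/
def shift (a : ℕ → ℕ) : ℕ → ℕ := fun n => a (n + 1)

/-- Strict lexicographic order on sequences. -/
def lexLt (a b : ℕ → ℕ) : Prop := ∃ n, (∀ i < n, a i = b i) ∧ a n < b n

/-- `T(x) = dx (mod 1)`. -/
def Tmap (d : ℕ) (x : ℝ) : ℝ := Int.fract (d * x)

/-- A λ-calibrated subaction for `A`: continuous on `[0,1]`, `b 0 = b 1`, and
`b(x) = max_{i<d} (λ b(τ_i x) + A(τ_i x))` for all `x ∈ [0,1]`. -/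
def IsCalibrated (lam : ℝ) (d : ℕ) (A b : ℝ → ℝ) : Prop :=
  ContinuousOn b (Icc 0 1) ∧ b 0 = b 1 ∧
    ∀ x ∈ Icc (0:ℝ) 1,
      IsGreatest {y : ℝ | ∃ i < d, y = lam * b (tau d i x) + A (tau d i x)} (b x)

/-- The twist condition: for `a < b` lexicographically and `x ∈ (0,1)`,
`∂S/∂x(x,a) − ∂S/∂x(x,b) > 0`. -/
def Twist (lam : ℝ) (d : ℕ) (A : ℝ → ℝ) : Prop :=
  ∀ a b : ℕ → ℕ, (∀ k, a k < d) → (∀ k, b k < d) → lexLt a b →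
    ∀ x ∈ Ioo (0:ℝ) 1,
      0 < deriv (fun y => Sfun lam d A y a) x - deriv (fun y => Sfun lam d A y b) x

/-- `Z(a) = Σ_k (λ/2)^k a_k`. -/
def Zfun (lam : ℝ) (a : ℕ → ℕ) : ℝ := ∑' k : ℕ, (lam / 2) ^ k * a k

/-- `ψ_k(a) = Σ_{j=0}^{k} a_j 2^{j−k−1}`. -/
def psi (a : ℕ → ℕ) (k : ℕ) : ℝ :=
  ∑ j ∈ Finset.range (k + 1), (a j : ℝ) * (2 : ℝ) ^ ((j : ℤ) - k - 1)

/-- Concatenation `i * c`. -/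
def cons (i : ℕ) (c : ℕ → ℕ) : ℕ → ℕ
  | 0 => i
  | n + 1 => c n

/-- The periodic sequence `(10)^∞ = (1,0,1,0,…)`. -/
def seq10 : ℕ → ℕ := fun n => if n % 2 = 0 then 1 else 0

/-- The periodic sequence `(01)^∞ = (0,1,0,1,…)`. -/
def seq01 : ℕ → ℕ := fun n => n % 2

/-- The periodic sequence `(110)^∞`. -/
def seq110 : ℕ → ℕ := fun n => if n % 3 = 2 then 0 else 1

/-- The periodic sequence `(101)^∞`. -/
def seq101 : ℕ → ℕ := fun n => if n % 3 = 1 then 0 else 1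

/-- The periodic sequence `(011)^∞`. -/
def seq011 : ℕ → ℕ := fun n => if n % 3 = 0 then 0 else 1

open Filter Function Topology

/-!
Walking backwards around the periodic orbit, `x j := T^[(k-1) j] z`, gives a `k`-periodic
sequence with `T (x (j+1)) = x j`; the branch of `T⁻¹` taking `x j` to `x (j+1)` is the integer
part of `d · x (j+1)`, so these branch indices form a `k`-periodic realizer `a`. The calibration
equality along the orbit reads `b (x j) = λ b (x (j+1)) + A (x (j+1))`; unrolling it `n` times
leaves the error `λⁿ b (x n)`, which tends to `0` because `b` takes only `k` values on the orbit.
-/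

/-- The index `i` of the inverse branch `τ_i` of `T` through `y`. -/
def branchIndex (d : ℕ) (y : ℝ) : ℕ := (⌊(d : ℝ) * y⌋).toNat

lemma Tmap_mem_Ico (d : ℕ) (x : ℝ) : Tmap d x ∈ Ico (0 : ℝ) 1 :=
  ⟨Int.fract_nonneg _, Int.fract_lt_one _⟩

lemma branchIndex_lt {d : ℕ} (hd : 0 < d) {y : ℝ} (hy : y < 1) : branchIndex d y < d := by
  have hlt : (d : ℝ) * y < d := mul_lt_of_lt_one_right (by exact_mod_cast hd) hy
  have : ⌊(d : ℝ) * y⌋ < d := Int.floor_lt.2 (by exact_mod_cast hlt)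
  unfold branchIndex
  omega

lemma tau_branchIndex_Tmap {d : ℕ} (hd : 0 < d) {y : ℝ} (hy : 0 ≤ y) :
    tau d (branchIndex d y) (Tmap d y) = y := by
  have hfloor : (branchIndex d y : ℝ) = ⌊(d : ℝ) * y⌋ := by
    rw [branchIndex]
    exact_mod_cast Int.toNat_of_nonneg (Int.floor_nonneg.2 (by positivity))
  rw [tau, Tmap, hfloor, Int.fract_add_floor,
    mul_div_cancel_left₀ _ (by exact_mod_cast hd.ne')]

lemma tpath_eq_of_forall_succ {d : ℕ} {a : ℕ → ℕ} {xs : ℕ → ℝ}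
    (hxs : ∀ j, xs (j + 1) = tau d (a j) (xs j)) (n : ℕ) : tpath d a (xs 0) n = xs (n + 1) := by
  induction n with
  | zero => exact (hxs 0).symm
  | succ n ih => rw [tpath, ih, hxs (n + 1)]

/-- On the orbit of a point of period `k`, `f^[k - 1]` inverts `f`. -/
def backwardOrbit {α : Type*} (f : α → α) (k : ℕ) (z : α) (j : ℕ) : α := f^[(k - 1) * j] z

section backwardOrbit

variable {α : Type*} {f : α → α} {k : ℕ} {z : α}

lemma apply_backwardOrbit_succ (hz : IsPeriodicPt f k z) (hk : 1 ≤ k) (j : ℕ) :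
    f (backwardOrbit f k z (j + 1)) = backwardOrbit f k z j := by
  have hexp : (k - 1) * (j + 1) + 1 = (k - 1) * j + k := by
    obtain ⟨k, rfl⟩ := Nat.exists_eq_add_of_le' hk
    simp only [Nat.add_sub_cancel]
    ring
  rw [backwardOrbit, ← iterate_succ_apply' f, Nat.succ_eq_add_one, hexp, iterate_add_apply, hz.eq,
    backwardOrbit]

lemma backwardOrbit_add_period (hz : IsPeriodicPt f k z) (j : ℕ) :
    backwardOrbit f k z (j + k) = backwardOrbit f k z j := by
  rw [backwardOrbit, mul_add, iterate_add_apply, (hz.const_mul (k - 1)).eq, backwardOrbit]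

lemma backwardOrbit_mem_orbit (hz : IsPeriodicPt f k z) (hk : 1 ≤ k) (j : ℕ) :
    ∃ m < k, backwardOrbit f k z j = f^[m] z :=
  ⟨(k - 1) * j % k, Nat.mod_lt _ hk, (hz.iterate_mod_apply _).symm⟩

lemma exists_abs_comp_backwardOrbit_le (g : α → ℝ) (hz : IsPeriodicPt f k z) (hk : 1 ≤ k) :
    ∃ M, ∀ j, |g (backwardOrbit f k z j)| ≤ M := by
  refine ⟨∑ m ∈ Finset.range k, |g (f^[m] z)|, fun j => ?_⟩
  obtain ⟨m, hm, hj⟩ := backwardOrbit_mem_orbit hz hk j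
  rw [hj]
  exact Finset.single_le_sum (f := fun m => |g (f^[m] z)|) (fun _ _ => abs_nonneg _)
    (Finset.mem_range.2 hm)

end backwardOrbit

lemma hasSum_of_eq_mul_succ_add {lam : ℝ} (hlam0 : 0 ≤ lam) (hlam1 : lam < 1) {u v : ℕ → ℝ}
    (hu : ∃ M, ∀ n, |u n| ≤ M) (h : ∀ j, u j = lam * u (j + 1) + v j) :
    HasSum (fun j => lam ^ j * v j) (u 0) := by
  obtain ⟨M, hM⟩ := hu
  have hpartial : ∀ n, ∑ j ∈ Finset.range n, lam ^ j * v j = u 0 - lam ^ n * u n := by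
    intro n
    induction n with
    | zero => simp
    | succ n ih => rw [Finset.sum_range_succ, ih, h n, pow_succ]; ring
  have hv : ∀ j, |v j| ≤ M + lam * M := fun j => by
    rw [show v j = u j - lam * u (j + 1) by linarith [h j]]
    calc |u j - lam * u (j + 1)| ≤ |u j| + lam * |u (j + 1)| := by
          simpa [abs_mul, abs_of_nonneg hlam0] using abs_sub (u j) (lam * u (j + 1))
      _ ≤ M + lam * M := by gcongr <;> exact hM _
  have hsummable : Summable fun j => lam ^ j * v j := by
    refine ((summable_geometric_of_lt_one hlam0 hlam1).mul_right (M + lam * M)).of_norm_bounded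
      fun j => ?_
    rw [Real.norm_eq_abs, abs_mul, abs_pow, abs_of_nonneg hlam0]
    exact mul_le_mul_of_nonneg_left (hv j) (by positivity)
  have hremainder : Tendsto (fun n => lam ^ n * u n) atTop (𝓝 0) := by
    refine squeeze_zero_norm (fun n => ?_)
      (by simpa using (tendsto_pow_atTop_nhds_zero_of_lt_one hlam0 hlam1).mul_const M)
    rw [Real.norm_eq_abs, abs_mul, abs_pow, abs_of_nonneg hlam0]
    exact mul_le_mul_of_nonneg_left (hM n) (by positivity)
  rw [hsummable.hasSum_iff_tendsto_nat, funext hpartial]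
  simpa using tendsto_const_nhds.sub hremainder

theorem stmt2_general (lam : ℝ) (hlam0 : 0 < lam) (hlam1 : lam < 1) (d : ℕ) (hd : 2 ≤ d)
    (A : ℝ → ℝ) (b : ℝ → ℝ)
    (z : ℝ) (k : ℕ) (hk : 1 ≤ k) (hzper : (Tmap d)^[k] z = z)
    (hcal : ∀ j : ℕ, b (Tmap d ((Tmap d)^[j] z)) =
      lam * b ((Tmap d)^[j] z) + A ((Tmap d)^[j] z)) :
    ∃ a : ℕ → ℕ, (∀ i, a i < d) ∧ (∀ n, a (n + k) = a n) ∧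
      ∃ xs : ℕ → ℝ, xs 0 = z ∧ (∀ j, xs (j + 1) = tau d (a j) (xs j)) ∧
        (∀ j, ∃ m < k, xs j = (Tmap d)^[m] z) ∧
        (∀ j, b (xs j) = lam * b (xs (j + 1)) + A (xs (j + 1))) ∧
        b z = Sfun lam d A z a := by
  have hz : IsPeriodicPt (Tmap d) k z := hzper
  have hd0 : 0 < d := by omega
  set x := backwardOrbit (Tmap d) k z
  have hT (j : ℕ) : Tmap d (x (j + 1)) = x j := apply_backwardOrbit_succ hz hk j
  have hx (j : ℕ) : x j ∈ Ico (0 : ℝ) 1 := hT j ▸ Tmap_mem_Ico d _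
  have hxper (j : ℕ) : x (j + k) = x j := backwardOrbit_add_period hz j
  set a : ℕ → ℕ := fun j => branchIndex d (x (j + 1))
  have hstep (j : ℕ) : x (j + 1) = tau d (a j) (x j) := by
    rw [← hT j, tau_branchIndex_Tmap hd0 (hx (j + 1)).1]
  have hcal' (j : ℕ) : b (x j) = lam * b (x (j + 1)) + A (x (j + 1)) := by
    rw [← hT j]; exact hcal _
  have hsum : HasSum (fun j => lam ^ j * A (x (j + 1))) (b z) :=
    hasSum_of_eq_mul_succ_add hlam0.le hlam1 (exists_abs_comp_backwardOrbit_le b hz hk) hcal'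
  refine ⟨a, fun j => branchIndex_lt hd0 (hx (j + 1)).2,
    fun n => by simp only [a, add_right_comm n k 1, hxper],
    x, rfl, hstep, backwardOrbit_mem_orbit hz hk, hcal', ?_⟩
  rw [Sfun, ← hsum.tsum_eq]
  exact tsum_congr fun j => by rw [← tpath_eq_of_forall_succ hstep]; rfl

/-- on a calibrated periodic orbit of period `k` the realizer can be taken
`σ`-periodic of period `k`, the associated backward orbit stays in the orbit of `z`,
calibration holds along it, and `b(z) = S(z,a)`. -/
theorem stmt2 (lam : ℝ) (hlam0 : 0 < lam) (hlam1 : lam < 1) (d : ℕ) (hd : 2 ≤ d)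
    (A : ℝ → ℝ) (K : NNReal) (hLip : LipschitzWith K A) (hper : Function.Periodic A 1)
    (b : ℝ → ℝ) (hb : IsCalibrated lam d A b)
    (z : ℝ) (hz : z ∈ Icc (0:ℝ) 1) (k : ℕ) (hk : 1 ≤ k) (hzper : (Tmap d)^[k] z = z)
    (hcal : ∀ j : ℕ, b (Tmap d ((Tmap d)^[j] z)) =
      lam * b ((Tmap d)^[j] z) + A ((Tmap d)^[j] z)) :
    ∃ a : ℕ → ℕ, (∀ i, a i < d) ∧ (∀ n, a (n + k) = a n) ∧
      ∃ xs : ℕ → ℝ, xs 0 = z ∧ (∀ j, xs (j + 1) = tau d (a j) (xs j)) ∧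
        (∀ j, ∃ m < k, xs j = (Tmap d)^[m] z) ∧
        (∀ j, b (xs j) = lam * b (xs (j + 1)) + A (xs (j + 1))) ∧
        b z = Sfun lam d A z a :=
  stmt2_general lam hlam0 hlam1 d hd A b z k hk hzper hcal

end
end

section
/- Let 0<λ<1, d≥2, let A:ℝ→ℝ be Lipschitz and 1-periodic, and let b be the λ-calibrated subaction for A. Then the set Ω={(x,a)∈[0,1]×Σ : b(x)=S(x,a)} is invariant under 𝕋^{-1}: if b(x)=S(x,a), then b(τ_{a₀}(x))=S(τ_{a₀}(x),σ(a)), i.e. 𝕋^{-1}(x,a)=(τ_{a₀}(x),σ(a))∈Ω. -/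
open Set

noncomputable section

/-!
Unfolding the first term of the series gives `S(x,a) = A(τ_{a₀}x) + λ S(τ_{a₀}x, σa)`, while the
calibration equation gives `b(x) ≥ A(τ_{a₀}x) + λ b(τ_{a₀}x)`. Hence `u = S - b` satisfies
`u ≤ λ · u ∘ 𝕋⁻¹`; as `u` is bounded and `λ < 1`, iterating gives `u ≤ 0`, i.e. `S ≤ b` everywhere.
If `b(x) = S(x,a)`, the two relations then force `λ b(τ_{a₀}x) ≤ λ S(τ_{a₀}x, σa)`, so equality
holds at `𝕋⁻¹(x,a)`.
-/

open Filter Topology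

theorem nonpos_of_le_mul_comp_of_bddAbove {α : Type*} {s : Set α} {g : α → α} {u : α → ℝ}
    {lam C : ℝ} (hlam0 : 0 ≤ lam) (hlam1 : lam < 1) (hg : MapsTo g s s)
    (hC : ∀ p ∈ s, u p ≤ C) (hu : ∀ p ∈ s, u p ≤ lam * u (g p)) :
    ∀ p ∈ s, u p ≤ 0 := by
  have hpow : ∀ n : ℕ, ∀ p ∈ s, u p ≤ lam ^ n * C := by
    intro n
    induction n with
    | zero => simpa using hC
    | succ n ih =>
      intro p hp
      calc u p ≤ lam * u (g p) := hu p hp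
        _ ≤ lam * (lam ^ n * C) := mul_le_mul_of_nonneg_left (ih _ (hg hp)) hlam0
        _ = lam ^ (n + 1) * C := by ring
  intro p hp
  have hlim : Tendsto (fun n : ℕ => lam ^ n * C) atTop (𝓝 0) := by
    simpa using (tendsto_pow_atTop_nhds_zero_of_lt_one hlam0 hlam1).mul_const C
  exact ge_of_tendsto' hlim fun n => hpow n p hp

section InverseBranches

variable {lam : ℝ} {d : ℕ} {A : ℝ → ℝ} {M : ℝ} {a : ℕ → ℕ} {x : ℝ}

theorem tau_mem_Icc {i : ℕ} (hi : i < d) (hx : x ∈ Icc (0 : ℝ) 1) :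
    tau d i x ∈ Icc (0 : ℝ) 1 := by
  have hd : (0 : ℝ) < d := by exact_mod_cast (Nat.zero_le i).trans_lt hi
  have hi' : (i : ℝ) + 1 ≤ d := by exact_mod_cast hi
  unfold tau
  constructor
  · exact div_nonneg (by linarith [hx.1, (Nat.cast_nonneg i : (0 : ℝ) ≤ i)]) hd.le
  · rw [div_le_one hd]
    linarith [hx.2]

theorem tpath_mem_Icc (ha : ∀ k, a k < d) (hx : x ∈ Icc (0 : ℝ) 1) :
    ∀ k, tpath d a x k ∈ Icc (0 : ℝ) 1
  | 0 => tau_mem_Icc (ha 0) hx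
  | k + 1 => tau_mem_Icc (ha (k + 1)) (tpath_mem_Icc ha hx k)

theorem tpath_succ (d : ℕ) (a : ℕ → ℕ) (x : ℝ) :
    ∀ k, tpath d a x (k + 1) = tpath d (shift a) (tau d (a 0) x) k
  | 0 => rfl
  | k + 1 => congrArg (tau d (a (k + 2))) (tpath_succ d a x k)

theorem summable_Sfun (hlam0 : 0 ≤ lam) (hlam1 : lam < 1) (hM : ∀ y ∈ Icc (0 : ℝ) 1, ‖A y‖ ≤ M)
    (ha : ∀ k, a k < d) (hx : x ∈ Icc (0 : ℝ) 1) :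
    Summable fun k : ℕ => lam ^ k * A (tpath d a x k) := by
  refine .of_norm_bounded ((summable_geometric_of_lt_one hlam0 hlam1).mul_right M) fun k => ?_
  rw [norm_mul, norm_pow, Real.norm_of_nonneg hlam0]
  exact mul_le_mul_of_nonneg_left (hM _ (tpath_mem_Icc ha hx k)) (pow_nonneg hlam0 k)

theorem Sfun_le_mul_inv_one_sub (hlam0 : 0 ≤ lam) (hlam1 : lam < 1)
    (hM : ∀ y ∈ Icc (0 : ℝ) 1, ‖A y‖ ≤ M)
    (ha : ∀ k, a k < d) (hx : x ∈ Icc (0 : ℝ) 1) :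
    Sfun lam d A x a ≤ M * (1 - lam)⁻¹ := by
  have hgeom := summable_geometric_of_lt_one hlam0 hlam1
  calc Sfun lam d A x a ≤ ∑' k : ℕ, lam ^ k * M := by
        refine (summable_Sfun hlam0 hlam1 hM ha hx).tsum_le_tsum (fun k => ?_) (hgeom.mul_right M)
        exact mul_le_mul_of_nonneg_left ((le_abs_self _).trans (hM _ (tpath_mem_Icc ha hx k)))
          (pow_nonneg hlam0 k)
    _ = M * (1 - lam)⁻¹ := by rw [tsum_mul_right, tsum_geometric_of_lt_one hlam0 hlam1, mul_comm]

theorem Sfun_eq_add_mul_Sfun_shift (hlam0 : 0 ≤ lam) (hlam1 : lam < 1)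
    (hM : ∀ y ∈ Icc (0 : ℝ) 1, ‖A y‖ ≤ M) (ha : ∀ k, a k < d) (hx : x ∈ Icc (0 : ℝ) 1) :
    Sfun lam d A x a = A (tau d (a 0) x) + lam * Sfun lam d A (tau d (a 0) x) (shift a) := by
  unfold Sfun
  rw [(summable_Sfun hlam0 hlam1 hM ha hx).tsum_eq_zero_add, ← tsum_mul_left]
  simp only [pow_zero, one_mul, tpath_succ, pow_succ', mul_assoc]
  rfl

theorem Sfun_le_of_isCalibrated {b : ℝ → ℝ} (hlam0 : 0 ≤ lam) (hlam1 : lam < 1)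
    (hA : ContinuousOn A (Icc 0 1)) (hb : IsCalibrated lam d A b)
    (ha : ∀ k, a k < d) (hx : x ∈ Icc (0 : ℝ) 1) :
    Sfun lam d A x a ≤ b x := by
  obtain ⟨M, hM⟩ := isCompact_Icc.exists_bound_of_continuousOn hA
  obtain ⟨N, hN⟩ := isCompact_Icc.exists_bound_of_continuousOn hb.1
  let s : Set (ℝ × (ℕ → ℕ)) := {p | p.1 ∈ Icc 0 1 ∧ ∀ k, p.2 k < d}
  let invT : ℝ × (ℕ → ℕ) → ℝ × (ℕ → ℕ) := fun p => (tau d (p.2 0) p.1, shift p.2)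
  have hmaps : MapsTo invT s s := fun p hp => ⟨tau_mem_Icc (hp.2 0) hp.1, fun k => hp.2 (k + 1)⟩
  have hbdd : ∀ p ∈ s, Sfun lam d A p.1 p.2 - b p.1 ≤ M * (1 - lam)⁻¹ + N := fun p hp => by
    linarith [Sfun_le_mul_inv_one_sub hlam0 hlam1 hM hp.2 hp.1, neg_le_of_abs_le (hN p.1 hp.1)]
  have hcontr : ∀ p ∈ s, Sfun lam d A p.1 p.2 - b p.1
      ≤ lam * (Sfun lam d A (invT p).1 (invT p).2 - b (invT p).1) := fun p hp => by
    have hcal := (hb.2.2 p.1 hp.1).2 ⟨p.2 0, hp.2 0, rfl⟩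
    rw [Sfun_eq_add_mul_Sfun_shift hlam0 hlam1 hM hp.2 hp.1]
    linarith
  exact sub_nonpos.1 (nonpos_of_le_mul_comp_of_bddAbove hlam0 hlam1 hmaps hbdd hcontr
    (x, a) ⟨hx, ha⟩)

end InverseBranches

theorem stmt8_general (lam : ℝ) (hlam0 : 0 < lam) (hlam1 : lam < 1) (d : ℕ)
    (A : ℝ → ℝ) (K : NNReal) (hLip : LipschitzWith K A)
    (b : ℝ → ℝ) (hb : IsCalibrated lam d A b) :
    ∀ x ∈ Icc (0:ℝ) 1, ∀ a : ℕ → ℕ, (∀ k, a k < d) →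
      b x = Sfun lam d A x a →
      b (tau d (a 0) x) = Sfun lam d A (tau d (a 0) x) (shift a) := by
  intro x hx a ha hbx
  have hA : ContinuousOn A (Icc 0 1) := hLip.continuous.continuousOn
  obtain ⟨M, hM⟩ := isCompact_Icc.exists_bound_of_continuousOn hA
  have hrec := Sfun_eq_add_mul_Sfun_shift hlam0.le hlam1 hM ha hx
  have hcal := (hb.2.2 x hx).2 ⟨a 0, ha 0, rfl⟩
  have hle := Sfun_le_of_isCalibrated hlam0.le hlam1 hA hb (fun k => ha (k + 1))
    (tau_mem_Icc (ha 0) hx)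
  have hge : b (tau d (a 0) x) ≤ Sfun lam d A (tau d (a 0) x) (shift a) :=
    le_of_mul_le_mul_left (by linarith) hlam0
  exact le_antisymm hge hle

/-- the set `Ω = {(x,a) : b(x) = S(x,a)}` is invariant under
`𝕋⁻¹(x,a) = (τ_{a₀}(x), σ(a))`. -/
theorem stmt8 (lam : ℝ) (hlam0 : 0 < lam) (hlam1 : lam < 1) (d : ℕ) (hd : 2 ≤ d)
    (A : ℝ → ℝ) (K : NNReal) (hLip : LipschitzWith K A) (hper : Function.Periodic A 1)
    (b : ℝ → ℝ) (hb : IsCalibrated lam d A b) :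
    ∀ x ∈ Icc (0:ℝ) 1, ∀ a : ℕ → ℕ, (∀ k, a k < d) →
      b x = Sfun lam d A x a →
      b (tau d (a 0) x) = Sfun lam d A (tau d (a 0) x) (shift a) :=
  stmt8_general lam hlam0 hlam1 d A K hLip b hb

end
end

section
/- Let 0<λ<1, d=2, and let A:ℝ→ℝ be C¹, 1-periodic and symmetric, i.e. A(1−x)=A(x) for all x∈[0,1], and assume A satisfies the twist condition. Then S(x,(10)^∞)=S(1−x,(01)^∞) for all x, S(1/2,(10)^∞)=S(1/2,(01)^∞), and the function b:[0,1]→ℝ defined by b(x)=S(x,(10)^∞) for 0≤x≤1/2 and b(x)=S(x,(01)^∞) for 1/2<x≤1 is the λ-calibrated subaction for A: it is continuous and satisfies b(x)=max_{i=0,1}(λ b(τ_i x)+A(τ_i x)) for every x∈[0,1]. -/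
open Set

noncomputable section

/-!
The reflection `x ↦ 1 - x` conjugates `τ_0` to `τ_1`, so it carries the orbit of `x` along
`(10)^∞` to the orbit of `1 - x` along `(01)^∞`; for symmetric `A` this gives
`S(x,(10)^∞) = S(1-x,(01)^∞)`, in particular equality at `x = 1/2`. By the twist condition
`S(·,(01)^∞) - S(·,(10)^∞)` is strictly increasing, so on `[0,1]`
`b = max (S(·,(01)^∞)) (S(·,(10)^∞))`. Finally `(01)^∞ = 0(10)^∞` and `(10)^∞ = 1(01)^∞`,
and the one-step expansion `S(x, i c) = A(τ_i x) + λ S(τ_i x, c)` identifies the two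
candidates `λ b(τ_i x) + A(τ_i x)` of the calibration equation with exactly these two
functions.
-/

lemma Function.Periodic.deriv {f : ℝ → ℝ} {c : ℝ} (h : Function.Periodic f c) :
    Function.Periodic (deriv f) c := fun x => by
  rw [← deriv_comp_add_const, show (fun y => f (y + c)) = f from funext h]

lemma Function.Periodic.exists_abs_le {f : ℝ → ℝ} {c : ℝ} (h : Function.Periodic f c)
    (hc : c ≠ 0) (hf : Continuous f) : ∃ M, ∀ x, |f x| ≤ M := by
  obtain ⟨M, hM⟩ := isBounded_iff_forall_norm_le.mp (h.isBounded_of_continuous hc hf)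
  exact ⟨M, fun x => hM _ (mem_range_self x)⟩

lemma Function.Periodic.map_one_sub {α : Type*} {f : ℝ → α} (h : Function.Periodic f 1)
    (hsymm : ∀ x ∈ Icc (0 : ℝ) 1, f (1 - x) = f x) (x : ℝ) : f (1 - x) = f x := by
  have hfract : f (Int.fract x) = f x := by
    rw [← Int.self_sub_floor, ← mul_one (⌊x⌋ : ℝ), h.sub_int_mul_eq]
  have hreflect : f (1 - Int.fract x) = f (1 - x) := by
    rw [← (h.int_mul ⌊x⌋) (1 - x), Int.fract]
    ring_nf
  rw [← hfract, ← hreflect]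
  exact hsymm _ ⟨Int.fract_nonneg x, (Int.fract_lt_one x).le⟩

section Sfun

variable {lam : ℝ} {d : ℕ} {A : ℝ → ℝ}

lemma tpath_cons (i : ℕ) (c : ℕ → ℕ) (x : ℝ) :
    ∀ k, tpath d (cons i c) x (k + 1) = tpath d c (tau d i x) k
  | 0 => rfl
  | k + 1 => congrArg (tau d (c (k + 1))) (tpath_cons i c x k)

lemma summable_Sfun_terms (hlam : |lam| < 1) {M : ℝ} (hA : ∀ x, |A x| ≤ M) (a : ℕ → ℕ)
    (x : ℝ) : Summable fun k => lam ^ k * A (tpath d a x k) :=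
  .of_norm_bounded ((summable_geometric_of_lt_one (abs_nonneg lam) hlam).mul_right M) fun k => by
    rw [Real.norm_eq_abs, abs_mul, abs_pow]
    exact mul_le_mul_of_nonneg_left (hA _) (by positivity)

lemma Sfun_cons (hlam : |lam| < 1) {M : ℝ} (hA : ∀ x, |A x| ≤ M) (i : ℕ) (c : ℕ → ℕ)
    (x : ℝ) : Sfun lam d A x (cons i c) = A (tau d i x) + lam * Sfun lam d A (tau d i x) c := by
  rw [Sfun, (summable_Sfun_terms hlam hA _ x).tsum_eq_zero_add, Sfun, ← tsum_mul_left]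
  simp only [pow_zero, one_mul, pow_succ, tpath_cons]
  congr 1
  exact tsum_congr fun k => by ring

lemma hasDerivAt_tpath (a : ℕ → ℕ) (x : ℝ) :
    ∀ k, HasDerivAt (fun y => tpath d a y k) ((d : ℝ)⁻¹ ^ (k + 1)) x
  | 0 => by
    show HasDerivAt (fun y : ℝ => (y + a 0) / d) _ x
    simpa using ((hasDerivAt_id x).add_const (a 0 : ℝ)).div_const (d : ℝ)
  | k + 1 => by
    show HasDerivAt (fun y => (tpath d a y k + a (k + 1)) / d) _ x
    exact (((hasDerivAt_tpath a x k).add_const (a (k + 1) : ℝ)).div_const (d : ℝ)).congr_deriv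
      (by rw [div_eq_mul_inv, pow_succ _ (k + 1)])

lemma differentiable_Sfun (hlam : |lam| < 1) (hA : Differentiable ℝ A) {M : ℝ}
    (hA' : ∀ x, |deriv A x| ≤ M) (a : ℕ → ℕ) : Differentiable ℝ fun y => Sfun lam d A y a := by
  refine differentiable_tsum' ((summable_geometric_of_lt_one (abs_nonneg lam) hlam).mul_right M)
    (fun k y => ((hA _).hasDerivAt.comp y (hasDerivAt_tpath a y k)).const_mul (lam ^ k))
    fun k y => ?_
  rw [Real.norm_eq_abs, abs_mul, abs_mul, abs_pow, abs_pow, abs_inv, Nat.abs_cast]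
  have hinv : ((d : ℝ)⁻¹) ^ (k + 1) ≤ 1 := pow_le_one₀ (by positivity) (Nat.cast_inv_le_one d)
  exact mul_le_mul_of_nonneg_left ((mul_le_of_le_one_right (abs_nonneg _) hinv).trans (hA' _))
    (by positivity)

lemma tpath_one_sub {a c : ℕ → ℕ} (hac : ∀ k, a k + c k + 1 = d) (x : ℝ) :
    ∀ k, tpath d c (1 - x) k = 1 - tpath d a x k
  | 0 => by
    have hd : (d : ℝ) = a 0 + c 0 + 1 := by exact_mod_cast (hac 0).symm
    simp only [tpath, tau, hd]
    field_simp
    ring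
  | k + 1 => by
    have hd : (d : ℝ) = a (k + 1) + c (k + 1) + 1 := by exact_mod_cast (hac (k + 1)).symm
    simp only [tpath, tau, tpath_one_sub hac x k, hd]
    field_simp
    ring

lemma Sfun_one_sub (hA : ∀ x, A (1 - x) = A x) {a c : ℕ → ℕ} (hac : ∀ k, a k + c k + 1 = d)
    (x : ℝ) : Sfun lam d A (1 - x) c = Sfun lam d A x a :=
  tsum_congr fun k => by rw [tpath_one_sub hac, hA]

lemma Twist.strictMonoOn_sub (ht : Twist lam d A) {a c : ℕ → ℕ} (ha : ∀ k, a k < d)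
    (hc : ∀ k, c k < d) (hac : lexLt a c) (hSa : Differentiable ℝ fun y => Sfun lam d A y a)
    (hSc : Differentiable ℝ fun y => Sfun lam d A y c) :
    StrictMonoOn (fun y => Sfun lam d A y a - Sfun lam d A y c) (Icc 0 1) := by
  refine strictMonoOn_of_deriv_pos (convex_Icc 0 1) (hSa.sub hSc).continuous.continuousOn
    fun x hx => ?_
  rw [interior_Icc] at hx
  rw [deriv_fun_sub (hSa x) (hSc x)]
  exact ht a c ha hc hac x hx

end Sfun

lemma seq10_eq_cons : seq10 = cons 1 seq01 := by
  funext n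
  rcases n with _ | n
  · rfl
  · simp only [seq10, seq01, cons]
    split_ifs <;> omega

lemma seq01_eq_cons : seq01 = cons 0 seq10 := by
  funext n
  rcases n with _ | n
  · rfl
  · simp only [seq10, seq01, cons]
    split_ifs <;> omega

lemma seq10_add_seq01 (k : ℕ) : seq10 k + seq01 k + 1 = 2 := by
  simp only [seq10, seq01]
  split_ifs <;> omega

lemma seq10_lt_two (k : ℕ) : seq10 k < 2 := by
  have := seq10_add_seq01 k
  omega

lemma seq01_lt_two (k : ℕ) : seq01 k < 2 := by
  have := seq10_add_seq01 k
  omega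

lemma lexLt_seq01_seq10 : lexLt seq01 seq10 :=
  ⟨0, fun _ h => absurd h (Nat.not_lt_zero _), by decide⟩

lemma isCalibrated_two_of_eq_max {lam : ℝ} {A b : ℝ → ℝ} (hb : ContinuousOn b (Icc 0 1))
    (hb01 : b 0 = b 1) (hmax : ∀ x ∈ Icc (0 : ℝ) 1, b x =
      max (lam * b (tau 2 0 x) + A (tau 2 0 x)) (lam * b (tau 2 1 x) + A (tau 2 1 x))) :
    IsCalibrated lam 2 A b := by
  refine ⟨hb, hb01, fun x hx => ⟨?_, ?_⟩⟩
  · rcases max_choice (lam * b (tau 2 0 x) + A (tau 2 0 x))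
      (lam * b (tau 2 1 x) + A (tau 2 1 x)) with h | h
    · exact ⟨0, two_pos, (hmax x hx).trans h⟩
    · exact ⟨1, one_lt_two, (hmax x hx).trans h⟩
  · rintro y ⟨i, hi, rfl⟩
    rw [hmax x hx]
    interval_cases i
    exacts [le_max_left _ _, le_max_right _ _]

lemma ite_le_half_eq_max {f g : ℝ → ℝ} (hmono : StrictMonoOn (fun y => f y - g y) (Icc 0 1))
    (hhalf : f (1 / 2) = g (1 / 2)) {x : ℝ} (hx : x ∈ Icc (0 : ℝ) 1) :
    (if x ≤ 1 / 2 then g x else f x) = max (f x) (g x) := by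
  have hmid : (1 / 2 : ℝ) ∈ Icc (0 : ℝ) 1 := by norm_num
  split_ifs with h
  · refine (max_eq_right ?_).symm
    have := hmono.monotoneOn hx hmid h
    simp only [hhalf, sub_self] at this
    linarith
  · refine (max_eq_left ?_).symm
    have := hmono hmid hx (not_le.mp h)
    simp only [hhalf, sub_self] at this
    linarith

/-- for a symmetric twist potential, `S(x,(10)^∞) = S(1−x,(01)^∞)`,
`S(1/2,(10)^∞) = S(1/2,(01)^∞)`, and the function equal to `S(·,(10)^∞)` on `[0,1/2]`
and to `S(·,(01)^∞)` on `(1/2,1]` is the λ-calibrated subaction for `A`. -/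
theorem stmt11 (lam : ℝ) (hlam0 : 0 < lam) (hlam1 : lam < 1)
    (A : ℝ → ℝ) (hA : ContDiff ℝ 1 A) (hper : Function.Periodic A 1)
    (hsym : ∀ x ∈ Icc (0:ℝ) 1, A (1 - x) = A x)
    (htwist : Twist lam 2 A)
    (b : ℝ → ℝ)
    (hbdef : ∀ x : ℝ,
      b x = if x ≤ 1/2 then Sfun lam 2 A x seq10 else Sfun lam 2 A x seq01) :
    (∀ x ∈ Icc (0:ℝ) 1, Sfun lam 2 A x seq10 = Sfun lam 2 A (1 - x) seq01) ∧
    Sfun lam 2 A (1/2) seq10 = Sfun lam 2 A (1/2) seq01 ∧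
    IsCalibrated lam 2 A b := by
  obtain ⟨M, hM⟩ := hper.exists_abs_le one_ne_zero hA.continuous
  obtain ⟨M', hM'⟩ := hper.deriv.exists_abs_le one_ne_zero (hA.continuous_deriv le_rfl)
  have hlam : |lam| < 1 := abs_lt.mpr ⟨by linarith, hlam1⟩
  have hS (a : ℕ → ℕ) : Differentiable ℝ fun y => Sfun lam 2 A y a :=
    differentiable_Sfun hlam (hA.differentiable one_ne_zero) hM' a
  have hreflect (x : ℝ) : Sfun lam 2 A x seq10 = Sfun lam 2 A (1 - x) seq01 :=
    (Sfun_one_sub (hper.map_one_sub hsym) seq10_add_seq01 x).symm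
  have hhalf : Sfun lam 2 A (1/2) seq10 = Sfun lam 2 A (1/2) seq01 := by
    rw [hreflect]
    norm_num
  have hmono := htwist.strictMonoOn_sub seq01_lt_two seq10_lt_two lexLt_seq01_seq10 (hS _) (hS _)
  have hb_left (y : ℝ) (hy : y ≤ 1/2) : b y = Sfun lam 2 A y seq10 := by rw [hbdef, if_pos hy]
  have hb_right (y : ℝ) (hy : 1/2 ≤ y) : b y = Sfun lam 2 A y seq01 := by
    rw [hbdef]
    split_ifs with h
    · rw [le_antisymm h hy, hhalf]
    · rfl
  have hstep0 (x : ℝ) (hx : x ≤ 1) :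
      lam * b (tau 2 0 x) + A (tau 2 0 x) = Sfun lam 2 A x seq01 := by
    rw [hb_left _ (by unfold tau; push_cast; linarith), seq01_eq_cons, Sfun_cons hlam hM]
    ring
  have hstep1 (x : ℝ) (hx : 0 ≤ x) :
      lam * b (tau 2 1 x) + A (tau 2 1 x) = Sfun lam 2 A x seq10 := by
    rw [hb_right _ (by unfold tau; push_cast; linarith), seq10_eq_cons, Sfun_cons hlam hM]
    ring
  refine ⟨fun x _ => hreflect x, hhalf, isCalibrated_two_of_eq_max ?_ ?_ fun x hx => ?_⟩
  · rw [funext hbdef]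
    exact (Continuous.if_le (hS _).continuous (hS _).continuous continuous_id continuous_const
      fun x (hx : x = 1/2) => hx ▸ hhalf).continuousOn
  · rw [hb_left 0 (by norm_num), hb_right 1 (by norm_num), hreflect, sub_zero]
  · rw [hbdef, ite_le_half_eq_max hmono hhalf.symm hx, hstep0 x hx.2, hstep1 x hx.1]
end
end

section
/- Let 0<λ<1, d=2, and let A(x)=c₀+c₁x+c₂x² be a quadratic polynomial. Then for every a∈Σ and every x∈(0,1), the function x↦S(x,a) is differentiable with ∂S/∂x(x,a) = c₁/(2−λ) + (2c₂/(4−λ))·x + (2c₂/(4−λ))·Z(a). Moreover, A satisfies the twist condition (for all a<b lexicographically and all x, ∂S/∂x(x,a)−∂S/∂x(x,b)>0) if and only if c₂<0. -/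
open Set

noncomputable section

/-!
Each branch `τ_{k,a}` is affine, `x ↦ x / 2^(k+1) + ψ_k(a)`, so for quadratic `A` the series
`S(·,a)` is a quadratic polynomial in `x`. Its `x²` coefficient does not depend on `a`, and its
`x` coefficient is affine in `∑ (λ/2)^k ψ_k(a) = 2 Z(a) / (4 - λ)`. The twist condition therefore
reduces to the sign of `c₂`, because `Z` is strictly increasing for the lexicographic order: the
weights `(λ/2)^k` decay faster than `2^{-k}`.
-/

theorem psi_zero (a : ℕ → ℕ) : psi a 0 = a 0 / 2 := by
  simp [psi, div_eq_mul_inv]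

theorem psi_succ (a : ℕ → ℕ) (k : ℕ) : psi a (k + 1) = (psi a k + a (k + 1)) / 2 := by
  have two_zpow (j : ℤ) : (2 : ℝ) ^ (j - 1) = 2 ^ j / 2 := by
    rw [zpow_sub_one₀ two_ne_zero, div_eq_mul_inv]
  rw [psi, psi, Finset.sum_range_succ _ (k + 1), add_div, Finset.sum_div]
  congr 1
  · refine Finset.sum_congr rfl fun j _ ↦ ?_
    rw [mul_div_assoc, ← two_zpow]
    push_cast
    ring_nf
  · simp [div_eq_mul_inv]

theorem tpath_two (a : ℕ → ℕ) (x : ℝ) (k : ℕ) : tpath 2 a x k = x / 2 ^ (k + 1) + psi a k := by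
  induction k with
  | zero => simp [tpath, tau, psi_zero, add_div]
  | succ k ih =>
    rw [tpath, tau, ih, psi_succ]
    push_cast
    ring

theorem psi_mem_Icc {a : ℕ → ℕ} (ha : ∀ k, a k < 2) (k : ℕ) : psi a k ∈ Icc (0 : ℝ) 1 := by
  have hak (k : ℕ) : (a k : ℝ) ≤ 1 := by exact_mod_cast Nat.le_of_lt_succ (ha k)
  induction k with
  | zero => rw [psi_zero]; constructor <;> linarith [hak 0, (a 0).cast_nonneg (α := ℝ)]
  | succ k ih =>
    rw [psi_succ]
    constructor <;> linarith [ih.1, ih.2, hak (k + 1), (a (k + 1)).cast_nonneg (α := ℝ)]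

theorem summable_pow_mul_of_abs_le {r C : ℝ} {g : ℕ → ℝ} (hr : |r| < 1) (hg : ∀ k, |g k| ≤ C) :
    Summable fun k ↦ r ^ k * g k :=
  .of_norm_bounded ((summable_geometric_of_abs_lt_one hr).abs.mul_right C) fun k ↦ by
    rw [norm_mul, norm_pow, Real.norm_eq_abs, abs_pow]
    exact mul_le_mul_of_nonneg_left (hg k) (by positivity)

theorem abs_natCast_le_one {a : ℕ → ℕ} (ha : ∀ k, a k < 2) (k : ℕ) : |(a k : ℝ)| ≤ 1 := by
  rw [Nat.abs_cast]; exact_mod_cast Nat.le_of_lt_succ (ha k)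

theorem abs_psi_le_one {a : ℕ → ℕ} (ha : ∀ k, a k < 2) (k : ℕ) : |psi a k| ≤ 1 :=
  abs_le.2 ⟨by linarith [(psi_mem_Icc ha k).1], (psi_mem_Icc ha k).2⟩

/-- Reindexing `ψ_{k+1} = (ψ_k + a_{k+1})/2` turns the series into a linear equation for itself. -/
theorem tsum_pow_mul_psi {r : ℝ} (hr : |r| < 1) {a : ℕ → ℕ} (ha : ∀ k, a k < 2) :
    ∑' k, r ^ k * psi a k = (∑' k, r ^ k * a k) / (2 - r) := by
  have hψ := summable_pow_mul_of_abs_le hr (abs_psi_le_one ha)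
  have ha' := summable_pow_mul_of_abs_le hr (abs_natCast_le_one ha)
  have hshift := summable_pow_mul_of_abs_le hr fun k ↦ abs_natCast_le_one ha (k + 1)
  have hstep (k : ℕ) : r ^ (k + 1) * psi a (k + 1) =
      r / 2 * (r ^ k * psi a k) + r / 2 * (r ^ k * a (k + 1)) := by
    rw [psi_succ]; ring
  have hF := hψ.tsum_eq_zero_add
  rw [tsum_congr hstep, (hψ.mul_left _).tsum_add (hshift.mul_left _), tsum_mul_left,
    tsum_mul_left, psi_zero] at hF
  have hZ := ha'.tsum_eq_zero_add
  simp_rw [pow_succ, mul_comm _ r, mul_assoc r] at hZ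
  rw [tsum_mul_left] at hZ
  have h2r : 2 - r ≠ 0 := by linarith [(abs_lt.1 hr).2]
  rw [eq_div_iff h2r]
  simp only [pow_zero, one_mul] at hF hZ
  linear_combination 2 * hF - hZ

theorem pow_mul_quadratic_div_two_pow_add {lam c₀ c₁ c₂ : ℝ} {A : ℝ → ℝ}
    (hA : ∀ x, A x = c₀ + c₁ * x + c₂ * x ^ 2) (k : ℕ) (x p : ℝ) :
    lam ^ k * A (x / 2 ^ (k + 1) + p) = lam ^ k * A p
      + (c₁ / 2 * (lam / 2) ^ k + c₂ * ((lam / 2) ^ k * p)) * x + c₂ / 4 * (lam / 4) ^ k * x ^ 2 := by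
  have h4 : (4 : ℝ) ^ k = 2 ^ k * 2 ^ k := by rw [← mul_pow]; norm_num
  rw [hA, hA, div_pow, div_pow, h4, pow_succ]
  field_simp
  ring

theorem Sfun_two_eq_of_quadratic {lam c₀ c₁ c₂ : ℝ} {A : ℝ → ℝ} (hlam : |lam| < 1)
    (hA : ∀ x, A x = c₀ + c₁ * x + c₂ * x ^ 2) {a : ℕ → ℕ} (ha : ∀ k, a k < 2) (x : ℝ) :
    Sfun lam 2 A x a = Sfun lam 2 A 0 a
      + (c₁ / (2 - lam) + 2 * c₂ / (4 - lam) * Zfun lam a) * x + c₂ / (4 - lam) * x ^ 2 := by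
  obtain ⟨hlam₁, hlam₂⟩ := abs_lt.1 hlam
  have h2 : 2 - lam ≠ 0 := by linarith
  have h4 : 4 - lam ≠ 0 := by linarith
  have hr2 : |lam / 2| < 1 := abs_lt.2 ⟨by linarith, by linarith⟩
  have hr4 : |lam / 4| < 1 := abs_lt.2 ⟨by linarith, by linarith⟩
  have hA_cont : Continuous A := by rw [funext hA]; fun_prop
  obtain ⟨C, hC⟩ := isCompact_Icc.exists_bound_of_continuousOn hA_cont.continuousOn
  have h0 : HasSum (fun k ↦ lam ^ k * A (psi a k)) (Sfun lam 2 A 0 a) := by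
    have := summable_pow_mul_of_abs_le hlam fun k ↦ hC _ (psi_mem_Icc ha k)
    simpa [Sfun, tpath_two] using this.hasSum
  have h1 : HasSum (fun k ↦ c₁ / 2 * (lam / 2) ^ k + c₂ * ((lam / 2) ^ k * psi a k))
      (c₁ / (2 - lam) + 2 * c₂ / (4 - lam) * Zfun lam a) := by
    have hsum : c₁ / (2 - lam) + 2 * c₂ / (4 - lam) * Zfun lam a
        = c₁ / 2 * (1 - lam / 2)⁻¹ + c₂ * ∑' k, (lam / 2) ^ k * psi a k := by
      rw [tsum_pow_mul_psi hr2 ha, ← Zfun, show (2 : ℝ) - lam / 2 = (4 - lam) / 2 by ring,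
        show (1 : ℝ) - lam / 2 = (2 - lam) / 2 by ring]
      field_simp
    rw [hsum]
    exact ((hasSum_geometric_of_abs_lt_one hr2).mul_left (c₁ / 2)).add
      ((summable_pow_mul_of_abs_le hr2 (abs_psi_le_one ha)).hasSum.mul_left c₂)
  have h2 : HasSum (fun k ↦ c₂ / 4 * (lam / 4) ^ k) (c₂ / (4 - lam)) := by
    have hsum : c₂ / (4 - lam) = c₂ / 4 * (1 - lam / 4)⁻¹ := by
      field_simp
    rw [hsum]
    exact (hasSum_geometric_of_abs_lt_one hr4).mul_left (c₂ / 4)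
  rw [← ((h0.add (h1.mul_right x)).add (h2.mul_right (x ^ 2))).tsum_eq, Sfun]
  exact tsum_congr fun k ↦ by rw [tpath_two, pow_mul_quadratic_div_two_pow_add hA]

theorem hasDerivAt_Sfun_two {lam c₀ c₁ c₂ : ℝ} {A : ℝ → ℝ} (hlam : |lam| < 1)
    (hA : ∀ x, A x = c₀ + c₁ * x + c₂ * x ^ 2) {a : ℕ → ℕ} (ha : ∀ k, a k < 2) (x : ℝ) :
    HasDerivAt (fun y ↦ Sfun lam 2 A y a)
      (c₁ / (2 - lam) + (2 * c₂ / (4 - lam)) * x + (2 * c₂ / (4 - lam)) * Zfun lam a) x := by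
  rw [funext (Sfun_two_eq_of_quadratic hlam hA ha)]
  set β := c₁ / (2 - lam) + 2 * c₂ / (4 - lam) * Zfun lam a
  have := (((hasDerivAt_id x).const_mul β).const_add (Sfun lam 2 A 0 a)).add
    ((hasDerivAt_pow 2 x).const_mul (c₂ / (4 - lam)))
  refine this.congr_deriv ?_
  simp only [β]
  ring

/-- For `r < 1/2` the weight `r^n` of the first nonzero digit beats the whole tail. -/
theorem tsum_pow_mul_pos_of_first_eq_one {r : ℝ} (hr0 : 0 < r) (hr : r < 1 / 2) {D : ℕ → ℝ}
    {n : ℕ} (hD : ∀ k, |D k| ≤ 1) (hhead : ∀ k < n, D k = 0) (hDn : D n = 1) :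
    0 < ∑' k, r ^ k * D k := by
  have habs : |r| < 1 := abs_lt.2 ⟨by linarith, by linarith⟩
  set T := ∑' i, r ^ i * D (i + (n + 1))
  have hT : ‖T‖ ≤ (1 - r)⁻¹ :=
    tsum_of_norm_bounded (hasSum_geometric_of_lt_one hr0.le (by linarith)) fun i ↦ by
      rw [norm_mul, norm_pow, Real.norm_eq_abs, abs_of_pos hr0]
      exact mul_le_of_le_one_right (by positivity) (hD _)
  have hrT : -1 < r * T := by
    have : r * (1 - r)⁻¹ < 1 := by
      rw [← div_eq_mul_inv, div_lt_one (by linarith)]; linarith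
    nlinarith [(abs_le.1 hT).1]
  have htail : ∑' i, r ^ (i + (n + 1)) * D (i + (n + 1)) = r ^ n * (r * T) := by
    rw [← mul_assoc, ← pow_succ, ← tsum_mul_left]
    exact tsum_congr fun i ↦ by ring
  have hsplit : ∑' k, r ^ k * D k = r ^ n * (1 + r * T) := by
    rw [← (summable_pow_mul_of_abs_le habs hD).sum_add_tsum_nat_add (n + 1),
      Finset.sum_range_succ, Finset.sum_eq_zero fun k hk ↦ by
        rw [hhead k (Finset.mem_range.1 hk), mul_zero], hDn, htail]
    ring
  rw [hsplit]
  exact mul_pos (pow_pos hr0 n) (by linarith)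

theorem tsum_pow_mul_lt_of_lexLt {r : ℝ} (hr0 : 0 < r) (hr : r < 1 / 2) {a b : ℕ → ℕ}
    (ha : ∀ k, a k < 2) (hb : ∀ k, b k < 2) (hab : lexLt a b) :
    ∑' k, r ^ k * a k < ∑' k, r ^ k * b k := by
  obtain ⟨n, hprefix, hlt⟩ := hab
  have habs : |r| < 1 := abs_lt.2 ⟨by linarith, by linarith⟩
  rw [← sub_pos, ← (summable_pow_mul_of_abs_le habs (abs_natCast_le_one hb)).tsum_sub
    (summable_pow_mul_of_abs_le habs (abs_natCast_le_one ha))]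
  simp_rw [← mul_sub]
  refine tsum_pow_mul_pos_of_first_eq_one hr0 hr (fun k ↦ ?_)
    (fun k hk ↦ by rw [hprefix k hk, sub_self]) ?_
  · have ha' : (a k : ℝ) ≤ 1 := by exact_mod_cast Nat.le_of_lt_succ (ha k)
    have hb' : (b k : ℝ) ≤ 1 := by exact_mod_cast Nat.le_of_lt_succ (hb k)
    rw [abs_sub_le_iff]
    constructor <;> linarith [(a k).cast_nonneg (α := ℝ), (b k).cast_nonneg (α := ℝ)]
  · have := hb n
    rw [show a n = 0 by omega, show b n = 1 by omega]
    norm_num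

theorem Zfun_lt_of_lexLt {lam : ℝ} (hlam0 : 0 < lam) (hlam1 : lam < 1) {a b : ℕ → ℕ}
    (ha : ∀ k, a k < 2) (hb : ∀ k, b k < 2) (hab : lexLt a b) : Zfun lam a < Zfun lam b :=
  tsum_pow_mul_lt_of_lexLt (half_pos hlam0) (by linarith) ha hb hab

theorem Zfun_cons_one_zero (lam : ℝ) : Zfun lam (cons 1 fun _ ↦ 0) = 1 := by
  rw [Zfun, tsum_eq_single 0 fun k hk ↦ ?_]
  · simp [cons]
  · obtain ⟨k, rfl⟩ := Nat.exists_eq_succ_of_ne_zero hk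
    simp [cons]

/-- for quadratic `A(x) = c₀ + c₁x + c₂x²`,
`∂S/∂x(x,a) = c₁/(2−λ) + (2c₂/(4−λ))x + (2c₂/(4−λ))Z(a)`, and `A` is twist iff `c₂ < 0`. -/
theorem stmt17 (lam : ℝ) (hlam0 : 0 < lam) (hlam1 : lam < 1) (c₀ c₁ c₂ : ℝ)
    (A : ℝ → ℝ) (hA : ∀ x, A x = c₀ + c₁ * x + c₂ * x ^ 2) :
    (∀ a : ℕ → ℕ, (∀ k, a k < 2) → ∀ x ∈ Ioo (0:ℝ) 1,
      HasDerivAt (fun y => Sfun lam 2 A y a)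
        (c₁ / (2 - lam) + (2 * c₂ / (4 - lam)) * x + (2 * c₂ / (4 - lam)) * Zfun lam a) x) ∧
    (Twist lam 2 A ↔ c₂ < 0) := by
  have hlam : |lam| < 1 := abs_lt.2 ⟨by linarith, hlam1⟩
  have hderiv_sub {a b : ℕ → ℕ} (ha : ∀ k, a k < 2) (hb : ∀ k, b k < 2) (x : ℝ) :
      deriv (fun y ↦ Sfun lam 2 A y a) x - deriv (fun y ↦ Sfun lam 2 A y b) x
        = 2 * c₂ / (4 - lam) * (Zfun lam a - Zfun lam b) := by
    rw [(hasDerivAt_Sfun_two hlam hA ha x).deriv, (hasDerivAt_Sfun_two hlam hA hb x).deriv]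
    ring
  have h4 : 0 < 4 - lam := by linarith
  refine ⟨fun a ha x _ ↦ hasDerivAt_Sfun_two hlam hA ha x, fun htwist ↦ ?_, fun hc₂ ↦ ?_⟩
  · have hb : ∀ k, cons 1 (fun _ ↦ 0) k < 2 := fun k ↦ by cases k <;> simp [cons]
    have := htwist _ _ (fun _ ↦ two_pos) hb ⟨0, by simp, by simp [cons]⟩ (1 / 2) (by norm_num)
    rw [hderiv_sub (fun _ ↦ two_pos) hb, Zfun_cons_one_zero, show Zfun lam (fun _ ↦ 0) = 0 by
      simp [Zfun]] at this
    by_contra! hc₂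
    have : 0 ≤ 2 * c₂ / (4 - lam) := by positivity
    linarith
  · intro a b ha hb hab x _
    rw [hderiv_sub ha hb]
    exact mul_pos_of_neg_of_neg (div_neg_of_neg_of_pos (by linarith) h4)
      (sub_neg.2 (Zfun_lt_of_lexLt hlam0 hlam1 ha hb hab))

end
end
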